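/- Let r ≥ 1 and n ≥ 0 be integers, let λ be a partition with |λ| = n(r+1), ℓ(λ) ≤ r, and λ_r ≥ n, and let T be an SSYT of shape λ in which each of the values 1, …, r+1 occurs exactly n times. Then every entry of T lying in a column of index greater than λ_r is at least 2, and the filling of shape μ = (λ_1 − λ_r, …, λ_{r−1} − λ_r) obtained by restricting T to the columns of index greater than λ_r and decreasing every entry by 1 is an SSYT of shape μ with entries in {1, …, r}. -/

import Mathlib

/-! The value `1` can only sit in the first row, and there it fills an initial segment of the
row; since it occurs only `n ≤ λ_r` times, every entry in a column beyond `λ_r` is at least `2`,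
so the shifted restriction is again semistandard. Every entry is at most `r + 1` because the
`n (r + 1)` cells are already used up by the `n` occurrences of each of `1, …, r + 1`. -/

open Finset

/-- A filling `T` of the Young diagram of `lam` (0-indexed rows and columns, with
junk value `0` outside the diagram) is a semistandard Young tableau. -/
def IsSSYT (lam : ℕ → ℕ) (T : ℕ → ℕ → ℕ) : Prop :=
  (∀ i j, j < lam i → 1 ≤ T i j) ∧
  (∀ i j, j + 1 < lam i → T i j ≤ T i (j + 1)) ∧
  (∀ i j, j < lam (i + 1) → T i j < T (i + 1) j) ∧
  (∀ i j, lam i ≤ j → T i j = 0)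

/-- The number of occurrences of the value `v` in the filling `T` of the diagram of `lam`. -/
noncomputable def content (lam : ℕ → ℕ) (T : ℕ → ℕ → ℕ) (v : ℕ) : ℕ :=
  Set.ncard {p : ℕ × ℕ | p.2 < lam p.1 ∧ T p.1 p.2 = v}

/-- The Kostka number `K_{lam, (n)^m}`: the number of SSYT of shape `lam` in which each of
the values `1, …, m` occurs exactly `n` times and no other values occur. -/
noncomputable def kostka (lam : ℕ → ℕ) (n m : ℕ) : ℕ :=
  Set.ncard {T : ℕ → ℕ → ℕ | IsSSYT lam T ∧ (∀ i j, j < lam i → T i j ≤ m) ∧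
    ∀ v, 1 ≤ v → v ≤ m → content lam T v = n}

/-- The number of SSYT of shape `lam` with entries in `{1, …, r}`. -/
noncomputable def ssytCount (lam : ℕ → ℕ) (r : ℕ) : ℕ :=
  Set.ncard {T : ℕ → ℕ → ℕ | IsSSYT lam T ∧ ∀ i j, j < lam i → T i j ≤ r}

/-- The number of SSYT of shape `lam` with entries in `{1, …, r}` and content `mu`
(the value `v+1` occurring exactly `mu v` times, `v : Fin r`). -/
noncomputable def kostkaC (lam : ℕ → ℕ) (r : ℕ) (mu : Fin r → ℕ) : ℕ :=
  Set.ncard {T : ℕ → ℕ → ℕ | IsSSYT lam T ∧ (∀ i j, j < lam i → T i j ≤ r) ∧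
    ∀ v : Fin r, content lam T ((v : ℕ) + 1) = mu v}

/-- The Schur polynomial `s_lam(x_1, …, x_r)`, where `w = |lam|` is the weight of `lam`:
the generating function of SSYT of shape `lam` with entries in `{1, …, r}` by content. -/
noncomputable def schur (r : ℕ) (lam : ℕ → ℕ) (w : ℕ) : MvPolynomial (Fin r) ℤ :=
  ∑ mu ∈ Fintype.piFinset (fun _ : Fin r => Finset.range (w + 1)),
    (kostkaC lam r mu : ℤ) • ∏ i, MvPolynomial.X i ^ mu i

/-- `κ_lam = 2 Σ_{i ≥ 1} Σ_{j=1}^{lam_i} (j - i)`, computed for a partition of length `≤ r`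
(rows are 0-indexed, so row `i` of the function is row `i+1` of the partition). -/
def kappa (r : ℕ) (lam : ℕ → ℕ) : ℤ :=
  2 * ∑ i ∈ Finset.range r, ∑ j ∈ Finset.Icc 1 (lam i), ((j : ℤ) - ((i : ℤ) + 1))

def cells (r : ℕ) (lam : ℕ → ℕ) : Finset (ℕ × ℕ) :=
  (range r).biUnion fun i => {i} ×ˢ range (lam i)

section cells

variable {r : ℕ} {lam : ℕ → ℕ}

theorem mem_cells {p : ℕ × ℕ} : p ∈ cells r lam ↔ p.1 < r ∧ p.2 < lam p.1 := by
  obtain ⟨i, j⟩ := p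
  simp [cells]

theorem card_cells : #(cells r lam) = ∑ i ∈ range r, lam i := by
  rw [cells, card_biUnion]
  · simp
  · intro i _ i' _ hii'
    simp only [Function.onFun, disjoint_left, mem_product, mem_singleton]
    rintro p ⟨rfl, -⟩ ⟨rfl, -⟩
    exact hii' rfl

theorem mem_cells_iff_of_length_le (hlen : ∀ i, r ≤ i → lam i = 0) {p : ℕ × ℕ} :
    p ∈ cells r lam ↔ p.2 < lam p.1 := by
  rw [mem_cells, and_iff_right_iff_imp]
  intro hp
  by_contra! hr
  rw [hlen p.1 hr] at hp
  omega

theorem content_eq_card_filter_cells (hlen : ∀ i, r ≤ i → lam i = 0) (T : ℕ → ℕ → ℕ) (v : ℕ) :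
    content lam T v = #{p ∈ cells r lam | T p.1 p.2 = v} := by
  rw [content, ← Set.ncard_coe_finset]
  congr 1
  ext p
  simp [mem_cells_iff_of_length_le hlen]

end cells

theorem succ_le_content_of_row_prefix {r : ℕ} {lam : ℕ → ℕ} (hlen : ∀ i, r ≤ i → lam i = 0)
    {T : ℕ → ℕ → ℕ} {i j v : ℕ} (hj : j < lam i) (hv : ∀ k ≤ j, T i k = v) :
    j + 1 ≤ content lam T v := by
  rw [content_eq_card_filter_cells hlen]
  have hsub : ({i} ×ˢ range (j + 1) : Finset (ℕ × ℕ)) ⊆ {p ∈ cells r lam | T p.1 p.2 = v} := by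
    rintro ⟨i', k⟩ hk
    simp only [mem_product, mem_singleton, mem_range] at hk
    obtain ⟨rfl, hk⟩ := hk
    simp only [mem_filter, mem_cells_iff_of_length_le hlen]
    exact ⟨by omega, hv k (by omega)⟩
  simpa using card_le_card hsub

theorem le_of_content_eq {r m n : ℕ} {lam : ℕ → ℕ} {T : ℕ → ℕ → ℕ}
    (hlen : ∀ i, r ≤ i → lam i = 0) (hwt : ∑ i ∈ range r, lam i = n * m)
    (hpos : ∀ i j, j < lam i → 1 ≤ T i j)
    (hcont : ∀ v, 1 ≤ v → v ≤ m → content lam T v = n) {i j : ℕ} (hj : j < lam i) :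
    T i j ≤ m := by
  by_contra! hbig
  set small := {p ∈ cells r lam | T p.1 p.2 ≤ m}
  have hmaps : Set.MapsTo (fun p : ℕ × ℕ => T p.1 p.2) small (Icc 1 m) := by
    intro p hp
    simp only [small, coe_filter, Set.mem_ofPred_eq, mem_cells_iff_of_length_le hlen] at hp
    simpa using ⟨hpos _ _ hp.1, hp.2⟩
  have hfiber : ∀ v ∈ Icc 1 m, #{p ∈ small | T p.1 p.2 = v} = n := by
    intro v hv
    rw [mem_Icc] at hv
    rw [← hcont v hv.1 hv.2, content_eq_card_filter_cells hlen, filter_filter]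
    congr 1
    refine filter_congr fun p _ => ?_
    constructor
    · exact fun h => h.2
    · rintro rfl; exact ⟨hv.2, rfl⟩
  have hcard_small : #small = n * m := by
    rw [card_eq_sum_card_fiberwise hmaps, sum_congr rfl hfiber]
    simp [Nat.mul_comm]
  have hssub : small ⊂ cells r lam :=
    filter_ssubset.2 ⟨(i, j), (mem_cells_iff_of_length_le hlen).2 hj, by simpa using hbig⟩
  have := card_lt_card hssub
  rw [hcard_small, card_cells, hwt] at this
  exact this.false

namespace IsSSYT

variable {lam : ℕ → ℕ} {T : ℕ → ℕ → ℕ}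

theorem row_mono (hT : IsSSYT lam T) {i j k : ℕ} (hkj : k ≤ j) (hj : j < lam i) :
    T i k ≤ T i j := by
  induction j with
  | zero => rw [Nat.le_zero.mp hkj]
  | succ j ih =>
    rcases hkj.eq_or_lt with rfl | hkj
    · exact le_rfl
    · exact (ih (by omega) (by omega)).trans (hT.2.1 i j hj)

theorem two_le_of_lt_succ (hT : IsSSYT lam T) (hdec : ∀ i, lam (i + 1) ≤ lam i) {i j : ℕ}
    (hj : j < lam (i + 1)) : 2 ≤ T (i + 1) j := by
  have := hT.1 i j (hj.trans_le (hdec i))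
  have := hT.2.2.1 i j hj
  omega

theorem two_le_of_content_one_le {r c : ℕ} (hT : IsSSYT lam T)
    (hdec : ∀ i, lam (i + 1) ≤ lam i) (hlen : ∀ i, r ≤ i → lam i = 0)
    (hone : content lam T 1 ≤ c) {i j : ℕ} (hcj : c ≤ j) (hj : j < lam i) : 2 ≤ T i j := by
  cases i with
  | succ i => exact hT.two_le_of_lt_succ hdec hj
  | zero =>
    by_contra! hlt
    have hprefix : ∀ k ≤ j, T 0 k = 1 := fun k hk => by
      have := hT.row_mono hk hj
      have := hT.1 0 k (by omega)
      omega
    have := succ_le_content_of_row_prefix hlen hj hprefix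
    omega

theorem drop_cols_pred (hT : IsSSYT lam T) {c : ℕ}
    (htwo : ∀ i j, c ≤ j → j < lam i → 2 ≤ T i j) :
    IsSSYT (fun i => lam i - c) (fun i j => if j < lam i - c then T i (j + c) - 1 else 0) := by
  refine ⟨fun i j hj => ?_, fun i j hj => ?_, fun i j hj => ?_, fun i j hj => ?_⟩ <;>
    beta_reduce at hj ⊢
  · have := htwo i (j + c) (by omega) (by omega)
    simp only [if_pos hj]
    omega
  · have := hT.2.1 i (j + c) (by omega)
    simp only [if_pos hj, if_pos (show j < lam i - c by omega), show j + 1 + c = j + c + 1 by omega]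
    omega
  · have := hT.2.2.1 i (j + c) (by omega)
    have := htwo (i + 1) (j + c) (by omega) (by omega)
    simp only [if_pos hj]
    split_ifs <;> omega
  · simp only [if_neg (show ¬j < lam i - c by omega)]

end IsSSYT

theorem restrict_ssyt_of_rectangular_part_general
    (r n : ℕ) (lam : ℕ → ℕ)
    (hdec : ∀ i, lam (i + 1) ≤ lam i)
    (hlen : ∀ i, r ≤ i → lam i = 0)
    (hwt : ∑ i ∈ Finset.range r, lam i = n * (r + 1))
    (hlast : n ≤ lam (r - 1))
    (T : ℕ → ℕ → ℕ)
    (hT : IsSSYT lam T)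
    (hTcont : ∀ v, 1 ≤ v → v ≤ r + 1 → content lam T v = n) :
    (∀ i j, lam (r - 1) ≤ j → j < lam i → 2 ≤ T i j) ∧
    IsSSYT (fun i => lam i - lam (r - 1))
      (fun i j => if j < lam i - lam (r - 1) then T i (j + lam (r - 1)) - 1 else 0) ∧
    (∀ i j, j < lam i - lam (r - 1) → T i (j + lam (r - 1)) - 1 ≤ r) := by
  have hone : content lam T 1 ≤ lam (r - 1) := (hTcont 1 le_rfl (by omega)).trans_le hlast
  have htwo : ∀ i j, lam (r - 1) ≤ j → j < lam i → 2 ≤ T i j :=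
    fun _ _ => hT.two_le_of_content_one_le hdec hlen hone
  refine ⟨htwo, hT.drop_cols_pred htwo, fun i j hj => ?_⟩
  have := le_of_content_eq hlen hwt hT.1 hTcont (i := i) (j := j + lam (r - 1)) (by omega)
  omega

/-- Let `r ≥ 1`, `n ≥ 0`, let `λ` be a partition with `|λ| = n(r+1)`,
`ℓ(λ) ≤ r`, `λ_r ≥ n`, and let `T` be an SSYT of shape `λ` in which each of the values
`1, …, r+1` occurs exactly `n` times.  Then every entry of `T` lying in a column of index
greater than `λ_r` is at least `2`, and restricting `T` to these columns and decreasing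
every entry by `1` yields an SSYT of shape `μ = (λ_1 - λ_r, …, λ_{r-1} - λ_r)` with
entries in `{1, …, r}`.  (Rows and columns are 0-indexed, so the columns of index
`> λ_r` in the 1-indexed convention are the columns `j ≥ lam (r-1)` here.) -/
theorem restrict_ssyt_of_rectangular_part
    (r n : ℕ) (hr : 1 ≤ r) (lam : ℕ → ℕ)
    (hdec : ∀ i, lam (i + 1) ≤ lam i)
    (hlen : ∀ i, r ≤ i → lam i = 0)
    (hwt : ∑ i ∈ Finset.range r, lam i = n * (r + 1))
    (hlast : n ≤ lam (r - 1))
    (T : ℕ → ℕ → ℕ)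
    (hT : IsSSYT lam T)
    (hTcont : ∀ v, 1 ≤ v → v ≤ r + 1 → content lam T v = n) :
    (∀ i j, lam (r - 1) ≤ j → j < lam i → 2 ≤ T i j) ∧
    IsSSYT (fun i => lam i - lam (r - 1))
      (fun i j => if j < lam i - lam (r - 1) then T i (j + lam (r - 1)) - 1 else 0) ∧
    (∀ i j, j < lam i - lam (r - 1) → T i (j + lam (r - 1)) - 1 ≤ r) :=
  restrict_ssyt_of_rectangular_part_general r n lam hdec hlen hwt hlast T hT hTcont
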